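/- Let A = (a_ij) be a real 3×3 matrix with c1 = −Tr(A) > 0, c3 = −det(A) > 0 and c1·c2 − c3 > 0 (where c2 = M12 + M13 + M23 is the sum of the 2×2 principal minors M12 = a11·a22 − a12·a21, M13 = a11·a33 − a13·a31, M23 = a22·a33 − a23·a32). If moreover (a11 > 0 or a22 > 0 or a33 > 0) or (M12 < 0 or M13 < 0 or M23 < 0), then A is excitable: every complex eigenvalue of A has strictly negative real part, yet there exist real numbers m1, m2, m3 ≥ 0 such that A − diag(m1, m2, m3) has a complex eigenvalue with nonnegative real part. -/
import Mathlib
open Matrix Polynomial Real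

private lemma charpoly_fin3' {R : Type*} [CommRing R] (b11 b12 b13 b21 b22 b23 b31 b32 b33 : R) :
    (!![b11,b12,b13;b21,b22,b23;b31,b32,b33] : Matrix (Fin 3) (Fin 3) R).charpoly
    = X^3 - C (b11+b22+b33) * X^2
      + C ((b11*b22 - b12*b21) + (b11*b33 - b13*b31) + (b22*b33 - b23*b32)) * X
      - C (b11*b22*b33 - b11*b23*b32 - b12*b21*b33 + b12*b23*b31 + b13*b21*b32 - b13*b22*b31) := by
  rw [Matrix.charpoly, Matrix.det_fin_three]
  simp [charmatrix_apply, Matrix.diagonal]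
  ring

private lemma stable_root' (t s d : ℝ) (hc1 : 0 < -t) (hc3 : 0 < -d)
    (h13 : 0 < (-t)*s - (-d)) (z : ℂ)
    (hz : ((X^3 - C t * X^2 + C s * X - C d : ℝ[X]).map (algebraMap ℝ ℂ)).IsRoot z) :
    z.re < 0 := by
  have hs : 0 < s := by nlinarith
  obtain ⟨x, y⟩ := z
  simp only [Polynomial.IsRoot, Polynomial.eval_map, Polynomial.eval₂_sub, Polynomial.eval₂_add,
    Polynomial.eval₂_mul, Polynomial.eval₂_pow, Polynomial.eval₂_X, Polynomial.eval₂_C,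
    Complex.ext_iff, pow_succ, pow_zero, one_mul, Complex.mul_re, Complex.mul_im,
    Complex.sub_re, Complex.sub_im, Complex.add_re, Complex.add_im, Complex.coe_algebraMap,
    Complex.ofReal_re, Complex.ofReal_im, Complex.zero_re, Complex.zero_im] at hz
  obtain ⟨hr, hi⟩ := hz
  have h1 : x^3 - 3*x*y^2 - t*(x^2 - y^2) + s*x - d = 0 := by nlinarith [hr]
  have h2 : y * (3*x^2 - y^2 - 2*t*x + s) = 0 := by nlinarith [hi]
  show x < 0
  by_contra hx
  push_neg at hx
  rcases mul_eq_zero.mp h2 with hy | hy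
  · rw [hy] at h1
    nlinarith [h1, mul_nonneg hx hx, mul_nonneg (mul_nonneg hx hx) hx]
  · have hy2 : y^2 = 3*x^2 - 2*t*x + s := by linarith
    have key : 8*x^3 - 8*t*x^2 + 2*(s + t^2)*x + (-t*s + d) = 0 := by
      linear_combination -h1 - (3*x - t) * hy2
    nlinarith [key, mul_nonneg hx hx, mul_nonneg (mul_nonneg hx hx) hx, sq_nonneg t,
      mul_nonneg hc1.le (mul_nonneg hx hx), mul_nonneg hs.le hx, mul_nonneg (sq_nonneg t) hx]

private lemma cubic_nonneg_root' (b c d : ℝ) (hd : d ≤ 0) :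
    ∃ x : ℝ, 0 ≤ x ∧ x^3 + b*x^2 + c*x + d = 0 := by
  set f : ℝ → ℝ := fun x => x^3 + b*x^2 + c*x + d with hf
  set M : ℝ := 1 + |b| + |c| + |d| with hM
  have hM1 : 1 ≤ M := by have := abs_nonneg b; have := abs_nonneg c; have := abs_nonneg d; linarith
  have hfM : 0 ≤ f M := by
    have h1 := neg_abs_le b
    have h2 := neg_abs_le c
    have h3 := neg_abs_le d
    have hb := abs_nonneg b
    have hc := abs_nonneg c
    have hdd := abs_nonneg d
    simp only [hf]
    nlinarith [sq_nonneg M, mul_nonneg hb hc, mul_nonneg hb hdd, mul_nonneg hc hdd,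
      mul_nonneg (mul_nonneg hb hb) hc]
  have hcont : ContinuousOn f (Set.Icc 0 M) := by fun_prop
  have hiv := intermediate_value_Icc (by linarith : (0:ℝ) ≤ M) hcont
  have h0 : (0:ℝ) ∈ Set.Icc (f 0) (f M) := by
    constructor
    · simpa [hf] using hd
    · exact hfM
  obtain ⟨x, hx, hfx⟩ := hiv h0
  exact ⟨x, hx.1, hfx⟩

private lemma exists_root_of_det_nonneg' (B : Matrix (Fin 3) (Fin 3) ℝ)
    (b11 b12 b13 b21 b22 b23 b31 b32 b33 : ℝ)
    (hB : B = !![b11,b12,b13;b21,b22,b23;b31,b32,b33])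
    (hdet : 0 ≤ b11*b22*b33 - b11*b23*b32 - b12*b21*b33 + b12*b23*b31 + b13*b21*b32 - b13*b22*b31) :
    ∃ z : ℂ, ((B.map (algebraMap ℝ ℂ)).charpoly).IsRoot z ∧ 0 ≤ z.re := by
  obtain ⟨x, hx, hfx⟩ := cubic_nonneg_root' (-(b11+b22+b33))
    ((b11*b22 - b12*b21) + (b11*b33 - b13*b31) + (b22*b33 - b23*b32))
    (-(b11*b22*b33 - b11*b23*b32 - b12*b21*b33 + b12*b23*b31 + b13*b21*b32 - b13*b22*b31))
    (by linarith)
  refine ⟨algebraMap ℝ ℂ x, ?_, by simpa using hx⟩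
  rw [hB, Matrix.charpoly_map, charpoly_fin3']
  rw [Polynomial.IsRoot, Polynomial.eval_map, Polynomial.eval₂_at_apply]
  have : Polynomial.eval x (X^3 - C (b11+b22+b33) * X^2
      + C ((b11*b22 - b12*b21) + (b11*b33 - b13*b31) + (b22*b33 - b23*b32)) * X
      - C (b11*b22*b33 - b11*b23*b32 - b12*b21*b33 + b12*b23*b31 + b13*b21*b32 - b13*b22*b31)) = 0 := by
    simp
    linarith [hfx]
  rw [this]
  simp

private lemma part2_of' (A : Matrix (Fin 3) (Fin 3) ℝ)
    (a11 a12 a13 a21 a22 a23 a31 a32 a33 m1 m2 m3 : ℝ)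
    (hA : A = !![a11, a12, a13; a21, a22, a23; a31, a32, a33])
    (h1 : 0 ≤ m1) (h2 : 0 ≤ m2) (h3 : 0 ≤ m3)
    (hdet : 0 ≤ (a11-m1)*(a22-m2)*(a33-m3) - (a11-m1)*a23*a32 - a12*a21*(a33-m3)
      + a12*a23*a31 + a13*a21*a32 - a13*(a22-m2)*a31) :
    ∃ m1 m2 m3 : ℝ, 0 ≤ m1 ∧ 0 ≤ m2 ∧ 0 ≤ m3 ∧ ∃ z : ℂ,
      (((A - Matrix.diagonal ![m1, m2, m3]).map (algebraMap ℝ ℂ)).charpoly).IsRoot z ∧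
      0 ≤ z.re := by
  refine ⟨m1, m2, m3, h1, h2, h3, ?_⟩
  have hB : A - Matrix.diagonal ![m1, m2, m3]
      = !![a11-m1, a12, a13; a21, a22-m2, a23; a31, a32, a33-m3] := by
    subst hA
    ext i j
    fin_cases i <;> fin_cases j <;> simp [Matrix.diagonal]
  exact exists_root_of_det_nonneg' _ _ _ _ _ _ _ _ _ _ hB (by nlinarith [hdet])

private lemma quad_t' (a b c : ℝ) (ha : 0 < a) : ∃ t : ℝ, 0 ≤ t ∧ 0 ≤ a*t^2 + b*t + c := by
  refine ⟨max 1 ((|b| + |c| + 1)/a), le_trans zero_le_one (le_max_left _ _), ?_⟩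
  set t := max 1 ((|b| + |c| + 1)/a) with hT
  have ht1 : 1 ≤ t := le_max_left _ _
  have ht2 : (|b| + |c| + 1)/a ≤ t := le_max_right _ _
  have hat : |b| + |c| + 1 ≤ a * t := by
    rw [div_le_iff₀ ha] at ht2; linarith [ht2]
  have hb := neg_abs_le b
  have hc := neg_abs_le c
  nlinarith [mul_nonneg (by linarith : (0:ℝ) ≤ t - 1) (by linarith [abs_nonneg c] : (0:ℝ) ≤ a*t + b - 1), abs_nonneg c]

private lemma lin_t' (a c : ℝ) (ha : 0 < a) : ∃ t : ℝ, 0 ≤ t ∧ 0 ≤ a*t + c := by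
  refine ⟨|c|/a, by positivity, ?_⟩
  rw [mul_div_cancel₀ _ (ne_of_gt ha)]
  linarith [neg_abs_le c]

theorem excitable_3x3 (a11 a12 a13 a21 a22 a23 a31 a32 a33 : ℝ)
    (A : Matrix (Fin 3) (Fin 3) ℝ)
    (hA : A = !![a11, a12, a13; a21, a22, a23; a31, a32, a33])
    (hc1 : 0 < -(a11 + a22 + a33))
    (hc3 : 0 < -A.det)
    (hc1c2c3 : 0 < (-(a11 + a22 + a33)) *
        ((a11 * a22 - a12 * a21) + (a11 * a33 - a13 * a31) + (a22 * a33 - a23 * a32))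
      - (-A.det))
    (hExc : (0 < a11 ∨ 0 < a22 ∨ 0 < a33) ∨
      (a11 * a22 - a12 * a21 < 0 ∨ a11 * a33 - a13 * a31 < 0 ∨ a22 * a33 - a23 * a32 < 0)) :
    (∀ z : ℂ, ((A.map (algebraMap ℝ ℂ)).charpoly).IsRoot z → z.re < 0) ∧
    (∃ m1 m2 m3 : ℝ, 0 ≤ m1 ∧ 0 ≤ m2 ∧ 0 ≤ m3 ∧ ∃ z : ℂ,
      (((A - Matrix.diagonal ![m1, m2, m3]).map (algebraMap ℝ ℂ)).charpoly).IsRoot z ∧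
      0 ≤ z.re) := by
  have hdetA : A.det = a11*a22*a33 - a11*a23*a32 - a12*a21*a33 + a12*a23*a31
      + a13*a21*a32 - a13*a22*a31 := by
    rw [hA, Matrix.det_fin_three]
    simp
  rw [hdetA] at hc3 hc1c2c3
  constructor
  · intro z hz
    rw [hA, Matrix.charpoly_map, charpoly_fin3'] at hz
    exact stable_root' _ _ _ hc1 hc3 hc1c2c3 z hz
  · have P := part2_of' A a11 a12 a13 a21 a22 a23 a31 a32 a33
    rcases hExc with (h | h | h) | (h | h | h)
    · obtain ⟨t, ht, hq⟩ := quad_t' a11 (-a11*(a22+a33) + a12*a21 + a13*a31)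
        (a11*a22*a33 - a11*a23*a32 - a12*a21*a33 + a12*a23*a31 + a13*a21*a32 - a13*a22*a31) h
      exact P 0 t t hA le_rfl ht ht (by nlinarith [hq])
    · obtain ⟨t, ht, hq⟩ := quad_t' a22 (-a22*(a11+a33) + a12*a21 + a23*a32)
        (a11*a22*a33 - a11*a23*a32 - a12*a21*a33 + a12*a23*a31 + a13*a21*a32 - a13*a22*a31) h
      exact P t 0 t hA ht le_rfl ht (by nlinarith [hq])
    · obtain ⟨t, ht, hq⟩ := quad_t' a33 (-a33*(a11+a22) + a13*a31 + a23*a32)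
        (a11*a22*a33 - a11*a23*a32 - a12*a21*a33 + a12*a23*a31 + a13*a21*a32 - a13*a22*a31) h
      exact P t t 0 hA ht ht le_rfl (by nlinarith [hq])
    · obtain ⟨t, ht, hq⟩ := lin_t' (-(a11*a22 - a12*a21))
        (a11*a22*a33 - a11*a23*a32 - a12*a21*a33 + a12*a23*a31 + a13*a21*a32 - a13*a22*a31)
        (by linarith)
      exact P 0 0 t hA le_rfl le_rfl ht (by nlinarith [hq])
    · obtain ⟨t, ht, hq⟩ := lin_t' (-(a11*a33 - a13*a31))
        (a11*a22*a33 - a11*a23*a32 - a12*a21*a33 + a12*a23*a31 + a13*a21*a32 - a13*a22*a31)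
        (by linarith)
      exact P 0 t 0 hA le_rfl ht le_rfl (by nlinarith [hq])
    · obtain ⟨t, ht, hq⟩ := lin_t' (-(a22*a33 - a23*a32))
        (a11*a22*a33 - a11*a23*a32 - a12*a21*a33 + a12*a23*a31 + a13*a21*a32 - a13*a22*a31)
        (by linarith)
      exact P t 0 0 hA ht le_rfl le_rfl (by nlinarith [hq])
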